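/- arXiv:2604.06058 — 5 statements merged into one kernel-verified Lean document; each statement's English description precedes it below -/
import Mathlib

section
/- Let g : ℝ → ℝ be L_d-Lipschitz on an interval [a, b] with b - a = T_p, and suppose g attains value d* ≥ 0 at some t* ∈ [a,b]. If T_p ≥ d*/L_d, then there exists a subinterval [τ₁, τ₂] ⊆ [a, b] such that ∫_{τ₁}^{τ₂} g(s) ds ≥ (d*)² / (2 L_d). -/
/-! Being `L`-Lipschitz, `g` lies above the tent `s ↦ d* - L |s - t*|`. As `r = d*/L ≤ b - a`,
some window `[u, u + r] ∋ t*` fits in `[a, b]`, and over it the tent has integral at least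
`r d* - L r² / 2 = d*² / (2L)`. -/

open intervalIntegral

theorem integral_abs_sub_of_le_of_le {t u v : ℝ} (hut : u ≤ t) (htv : t ≤ v) :
    ∫ s in u..v, |s - t| = ((t - u) ^ 2 + (v - t) ^ 2) / 2 := by
  have hcont : Continuous fun s : ℝ => |s - t| := by fun_prop
  have hsq (w : ℝ) : ∫ s in Set.uIoc t w, |s - t| = (w - t) ^ 2 / 2 := by
    simpa [sq_abs, one_add_one_eq_two] using integral_pow_abs_sub_uIoc (a := t) (b := w) 1
  rw [← integral_add_adjacent_intervals (b := t) (hcont.intervalIntegrable _ _)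
    (hcont.intervalIntegrable _ _), integral_of_le hut, integral_of_le htv,
    ← Set.uIoc_of_ge hut, ← Set.uIoc_of_le htv, hsq, hsq]
  ring

theorem LipschitzWith.sub_mul_abs_sub_le {f : ℝ → ℝ} {K : NNReal} (hf : LipschitzWith K f)
    (s t : ℝ) :
    f t - K * |s - t| ≤ f s := by
  have := hf.dist_le_mul s t
  rw [Real.dist_eq, Real.dist_eq] at this
  linarith [neg_abs_le (f s - f t)]

theorem LipschitzWith.le_integral_of_le_of_le {f : ℝ → ℝ} {K : NNReal}
    (hf : LipschitzWith K f)
    {t u v : ℝ} (hut : u ≤ t) (htv : t ≤ v) :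
    (v - u) * f t - K * (v - u) ^ 2 / 2 ≤ ∫ s in u..v, f s := by
  have htent : Continuous fun s => f t - K * |s - t| := by fun_prop
  calc (v - u) * f t - K * (v - u) ^ 2 / 2
      ≤ (v - u) * f t - K * (((t - u) ^ 2 + (v - t) ^ 2) / 2) := by
        gcongr
        nlinarith [mul_nonneg (sub_nonneg.2 hut) (sub_nonneg.2 htv)]
    _ = ∫ s in u..v, (f t - K * |s - t|) := by
        have hK : Continuous fun s => (K : ℝ) * |s - t| := by fun_prop
        rw [integral_sub intervalIntegrable_const (hK.intervalIntegrable _ _), integral_const_mul,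
          integral_abs_sub_of_le_of_le hut htv, integral_const, smul_eq_mul]
    _ ≤ ∫ s in u..v, f s :=
        integral_mono_on (hut.trans htv) (htent.intervalIntegrable _ _)
          (hf.continuous.intervalIntegrable _ _) fun s _ => hf.sub_mul_abs_sub_le s t

theorem exists_window_of_mem_Icc {a b t r : ℝ} (ht : t ∈ Set.Icc a b) (hr : 0 ≤ r)
    (hrab : r ≤ b - a) : ∃ u, a ≤ u ∧ u ≤ t ∧ t ≤ u + r ∧ u + r ≤ b := by
  refine ⟨min t (b - r), le_min ht.1 (by linarith), min_le_left _ _, ?_,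
    by linarith [min_le_right t (b - r)]⟩
  rcases min_cases t (b - r) with ⟨h, -⟩ | ⟨h, -⟩ <;> rw [h] <;> linarith [ht.2]

theorem stmt_1_general (g : ℝ → ℝ) (Ld Tp a b tstar dstar : ℝ)
    (hLd : 0 < Ld)
    (hg : LipschitzWith Ld.toNNReal g)
    (hts : tstar ∈ Set.Icc a b) (hval : g tstar = dstar) (hd0 : 0 ≤ dstar)
    (hab : b - a = Tp) (hcase : Tp ≥ dstar / Ld) :
    ∃ τ₁ τ₂ : ℝ, a ≤ τ₁ ∧ τ₁ ≤ τ₂ ∧ τ₂ ≤ b ∧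
      (∫ s in τ₁..τ₂, g s) ≥ dstar ^ 2 / (2 * Ld) := by
  set r := dstar / Ld with hr
  obtain ⟨u, hau, hut, htv, hvb⟩ :=
    exists_window_of_mem_Icc hts (div_nonneg hd0 hLd.le) (hab ▸ hcase)
  refine ⟨u, u + r, hau, hut.trans htv, hvb, ?_⟩
  have hbound := hg.le_integral_of_le_of_le hut htv
  rw [Real.coe_toNNReal _ hLd.le, hval, add_sub_cancel_left] at hbound
  calc dstar ^ 2 / (2 * Ld) = r * dstar - Ld * r ^ 2 / 2 := by
        rw [hr]; field_simp; ring
    _ ≤ _ := hbound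

theorem stmt_1 (g : ℝ → ℝ) (Ld Tp a b tstar dstar : ℝ)
    (hLd : 0 < Ld) (hTp : 0 < Tp)
    (hg : LipschitzWith Ld.toNNReal g)
    (hts : tstar ∈ Set.Icc a b) (hval : g tstar = dstar) (hd0 : 0 ≤ dstar)
    (hab : b - a = Tp) (hcase : Tp ≥ dstar / Ld) :
    ∃ τ₁ τ₂ : ℝ, a ≤ τ₁ ∧ τ₁ ≤ τ₂ ∧ τ₂ ≤ b ∧
      (∫ s in τ₁..τ₂, g s) ≥ dstar ^ 2 / (2 * Ld) :=
  stmt_1_general g Ld Tp a b tstar dstar hLd hg hts hval hd0 hab hcase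
end

section
/- Let d : ℝ → ℝⁿ be L_d-Lipschitz on [a,b] with b − a = T_p, and let S = sup over a ≤ τ₁ ≤ τ₂ ≤ b of ‖∫_{τ₁}^{τ₂} d(s) ds‖. Let d* = sup_{t ∈ [a,b]} ‖d(t)‖. If S ≤ q and q < (1/2)·L_d·T_p², then d* ≤ √(2·L_d·q). -/
/-!
Fix `t`, put `D = ‖d t‖` and `r = D / L_d`. The Lipschitz bound gives
`⟪d t, d s⟫ ≥ D (D - L_d |s - t|)`, so pairing `∫_{τ₁}^{τ₂} d` with `d t` shows that the
integral of the tent `D - L_d |s - t|` over any window `[τ₁, τ₂] ∋ t` is at most `S ≤ q`.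
On the window `[t - r, t + r] ∩ [a, b]` the tent is nonnegative and its integral is at least
`D / 2` times the window's length. That length is at least `min r T_p`, and `r > T_p` would
force `q ≥ D T_p / 2 > L_d T_p² / 2`. Hence `D r ≤ 2 q`, i.e. `D² ≤ 2 L_d q`.
-/

open MeasureTheory intervalIntegral Set
open scoped NNReal RealInnerProductSpace

lemma integral_abs_sub_of_mem_Icc {τ₁ τ₂ t : ℝ} (ht : t ∈ Icc τ₁ τ₂) :
    ∫ s in τ₁..τ₂, |s - t| = ((t - τ₁) ^ 2 + (τ₂ - t) ^ 2) / 2 := by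
  have hcont : Continuous fun s : ℝ => |s - t| := by fun_prop
  have hleft : ∫ s in τ₁..t, |s - t| = ∫ s in τ₁..t, (t - s) := by
    refine integral_congr fun s hs => ?_
    rw [uIcc_of_le ht.1] at hs
    rw [abs_sub_comm]
    exact abs_of_nonneg (by linarith [hs.2])
  have hright : ∫ s in t..τ₂, |s - t| = ∫ s in t..τ₂, (s - t) := by
    refine integral_congr fun s hs => ?_
    rw [uIcc_of_le ht.2] at hs
    exact abs_of_nonneg (by linarith [hs.1])
  rw [← integral_add_adjacent_intervals (hcont.intervalIntegrable τ₁ t)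
    (hcont.intervalIntegrable t τ₂), hleft, hright, integral_comp_sub_left (fun x => x),
    integral_comp_sub_right (fun x => x)]
  simp only [sub_self, integral_id]
  ring

lemma half_mul_le_integral_tent {D L τ₁ τ₂ t : ℝ} (ht : t ∈ Icc τ₁ τ₂)
    (h₁ : L * (t - τ₁) ≤ D) (h₂ : L * (τ₂ - t) ≤ D) :
    D * (τ₂ - τ₁) / 2 ≤ ∫ s in τ₁..τ₂, (D - L * |s - t|) := by
  have hcont : Continuous fun s : ℝ => |s - t| := by fun_prop
  rw [integral_sub intervalIntegrable_const ((hcont.intervalIntegrable _ _).const_mul L),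
    intervalIntegral.integral_const, intervalIntegral.integral_const_mul,
    integral_abs_sub_of_mem_Icc ht, smul_eq_mul]
  nlinarith [ht.1, ht.2]

lemma norm_mul_sub_le_inner {E : Type*} [NormedAddCommGroup E] [InnerProductSpace ℝ E]
    {x y : E} {δ : ℝ} (h : ‖x - y‖ ≤ δ) : ‖y‖ * (‖y‖ - δ) ≤ ⟪y, x⟫ := by
  have hsplit : ⟪y, x⟫ = ‖y‖ ^ 2 + ⟪y, x - y⟫ := by
    rw [inner_sub_right, real_inner_self_eq_norm_sq]
    ring
  have hcs : -(‖y‖ * ‖x - y‖) ≤ ⟪y, x - y⟫ :=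
    neg_le_of_abs_le (abs_real_inner_le_norm y (x - y))
  nlinarith [mul_le_mul_of_nonneg_left h (norm_nonneg y)]

lemma integral_tent_le_norm_integral {E : Type*} [NormedAddCommGroup E]
    [InnerProductSpace ℝ E] [CompleteSpace E] {d : ℝ → E} {L : ℝ≥0} {τ₁ τ₂ t : ℝ}
    (hd : LipschitzOnWith L d (Icc τ₁ τ₂)) (ht : t ∈ Icc τ₁ τ₂) (h0 : d t ≠ 0) :
    ∫ s in τ₁..τ₂, (‖d t‖ - L * |s - t|) ≤ ‖∫ s in τ₁..τ₂, d s‖ := by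
  have hτ : τ₁ ≤ τ₂ := ht.1.trans ht.2
  have hint : IntervalIntegrable d volume τ₁ τ₂ := hd.continuousOn.intervalIntegrable_of_Icc hτ
  have htent : Continuous fun s : ℝ => ‖d t‖ - L * |s - t| := by fun_prop
  refine le_of_mul_le_mul_left ?_ (norm_pos_iff.2 h0)
  calc ‖d t‖ * ∫ s in τ₁..τ₂, (‖d t‖ - L * |s - t|)
      = ∫ s in τ₁..τ₂, ‖d t‖ * (‖d t‖ - L * |s - t|) :=
        (intervalIntegral.integral_const_mul _ _).symm
    _ ≤ ∫ s in τ₁..τ₂, ⟪d t, d s⟫ := by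
      refine integral_mono_on hτ ((htent.intervalIntegrable _ _).const_mul _)
        ((continuousOn_const.inner hd.continuousOn).intervalIntegrable_of_Icc hτ)
        fun s hs => norm_mul_sub_le_inner ?_
      simpa [dist_eq_norm, Real.dist_eq] using hd.dist_le_mul s hs t ht
    _ = ⟪d t, ∫ s in τ₁..τ₂, d s⟫ := (innerSL ℝ (d t)).intervalIntegral_comp_comm hint
    _ ≤ ‖d t‖ * ‖∫ s in τ₁..τ₂, d s‖ := real_inner_le_norm _ _

lemma sq_le_two_mul_of_window_bound {L r q a b t : ℝ} (hL : 0 < L) (hr : 0 < r)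
    (ht : t ∈ Icc a b)
    (hwin : L * r * (min b (t + r) - max a (t - r)) / 2 ≤ q)
    (hq : q < 1 / 2 * L * (b - a) ^ 2) : (L * r) ^ 2 ≤ 2 * L * q := by
  have hwidth : min r (b - a) ≤ min b (t + r) - max a (t - r) := by
    rcases min_cases b (t + r) with ⟨hmin, _⟩ | ⟨hmin, _⟩ <;>
      rcases max_cases a (t - r) with ⟨hmax, _⟩ | ⟨hmax, _⟩ <;>
      rw [hmin, hmax] <;> linarith [min_le_left r (b - a), min_le_right r (b - a), ht.1, ht.2]
  rcases le_or_gt r (b - a) with hrT | hrT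
  · rw [min_eq_left hrT] at hwidth
    nlinarith [mul_le_mul_of_nonneg_left hwidth (mul_pos hL hr).le]
  · rw [min_eq_right hrT.le] at hwidth
    nlinarith [mul_le_mul_of_nonneg_left hwidth (mul_pos hL hr).le,
      mul_le_mul_of_nonneg_left hrT.le (mul_nonneg hL.le (sub_nonneg.2 (ht.1.trans ht.2)))]

theorem stmt_3_general (n : ℕ) (d : ℝ → EuclideanSpace ℝ (Fin n))
    (Ld Tp a b q : ℝ) (hLd : 0 < Ld)
    (hd : LipschitzOnWith Ld.toNNReal d (Set.Icc a b))
    (hab : b - a = Tp)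
    (hS : ∀ τ₁ τ₂ : ℝ, a ≤ τ₁ → τ₁ ≤ τ₂ → τ₂ ≤ b →
      ‖∫ s in τ₁..τ₂, d s‖ ≤ q)
    (hcase : q < (1 / 2) * Ld * Tp ^ 2) :
    ∀ t ∈ Set.Icc a b, ‖d t‖ ≤ Real.sqrt (2 * Ld * q) := by
  intro t ht
  rcases eq_or_ne (d t) 0 with h0 | h0
  · simp [h0]
  set r := ‖d t‖ / Ld
  have hr : 0 < r := div_pos (norm_pos_iff.2 h0) hLd
  have hLr : Ld * r = ‖d t‖ := mul_div_cancel₀ _ hLd.ne'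
  set τ₁ := max a (t - r)
  set τ₂ := min b (t + r)
  have htτ : t ∈ Icc τ₁ τ₂ := ⟨max_le ht.1 (by linarith), le_min ht.2 (by linarith)⟩
  have hwin : Ld * r * (τ₂ - τ₁) / 2 ≤ q :=
    calc Ld * r * (τ₂ - τ₁) / 2 ≤ ∫ s in τ₁..τ₂, (‖d t‖ - Ld * |s - t|) := by
          rw [hLr]
          refine half_mul_le_integral_tent htτ ?_ ?_ <;> rw [← hLr] <;>
            gcongr <;> linarith [le_max_right a (t - r), min_le_right b (t + r)]
      _ ≤ ‖∫ s in τ₁..τ₂, d s‖ := by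
          simpa [Real.coe_toNNReal _ hLd.le] using integral_tent_le_norm_integral
            (hd.mono (Icc_subset_Icc (le_max_left _ _) (min_le_left _ _))) htτ h0
      _ ≤ q := hS τ₁ τ₂ (le_max_left _ _) (htτ.1.trans htτ.2) (min_le_left _ _)
  rw [← hLr]
  exact Real.le_sqrt_of_sq_le (sq_le_two_mul_of_window_bound hLd hr ht hwin (by rwa [hab]))

theorem stmt_3 (n : ℕ) (d : ℝ → EuclideanSpace ℝ (Fin n))
    (Ld Tp a b q : ℝ) (hLd : 0 < Ld) (hTp : 0 < Tp) (hq : 0 ≤ q)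
    (hd : LipschitzOnWith Ld.toNNReal d (Set.Icc a b))
    (hcont : Continuous d)
    (hab : b - a = Tp)
    (hS : ∀ τ₁ τ₂ : ℝ, a ≤ τ₁ → τ₁ ≤ τ₂ → τ₂ ≤ b →
      ‖∫ s in τ₁..τ₂, d s‖ ≤ q)
    (hcase : q < (1 / 2) * Ld * Tp ^ 2) :
    ∀ t ∈ Set.Icc a b, ‖d t‖ ≤ Real.sqrt (2 * Ld * q) :=
  stmt_3_general n d Ld Tp a b q hLd hd hab hS hcase
end

section
/- Let d : ℝ → ℝⁿ be L_d-Lipschitz on [a,b] with b − a = T_p, let S be the supremum integral score over [a,b], and let q ≥ 0. Define d̄ = √(2·L_d·q) if q < (1/2)·L_d·T_p², and d̄ = q/T_p + (1/2)·L_d·T_p otherwise. If S ≤ q then ‖d(t)‖ ≤ d̄ for all t ∈ [a,b]. -/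
/-!
Testing `d` against a norming functional of `d t` reduces the claim to a real function `φ` with
`φ t = ‖d t‖`, Lipschitz with the same constant, whose integral over every subinterval is at
most `q`. Then `φ s ≥ φ t - L |s - t|`, so integrating over a window around `t` gives
`φ t (α + β) - L (α² + β²) / 2 ≤ q` for the window `[t - α, t + β] ⊆ [a, b]`. If the window of
radius `φ t / L` fits on one side of `t`, this gives `φ t ^ 2 ≤ 2 L q`; otherwise the whole
interval `[a, b]` is a window with `α, β ≤ φ t / L`, which gives `φ t T ≤ 2 q` and
`φ t T ≤ q + L T² / 2`.
-/

open Set MeasureTheory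

theorem intervalIntegral.integral_const_sub_mul (c L x : ℝ) :
    ∫ s in (0 : ℝ)..x, (c - L * s) = c * x - L * x ^ 2 / 2 := by
  rw [integral_sub intervalIntegrable_const ((continuous_const_mul L).intervalIntegrable _ _),
    integral_const_mul]
  simp only [integral_const, integral_id, smul_eq_mul]
  ring

theorem LipschitzOnWith.apply_sub_mul_abs_le {φ : ℝ → ℝ} {L : ℝ} {s t : ℝ} {A : Set ℝ}
    (hφ : LipschitzOnWith L.toNNReal φ A) (hL : 0 ≤ L) (hs : s ∈ A) (ht : t ∈ A) :
    φ t - L * |s - t| ≤ φ s := by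
  have h := hφ.dist_le_mul s hs t ht
  rw [Real.coe_toNNReal _ hL, Real.dist_eq, Real.dist_eq] at h
  linarith [neg_abs_le (φ s - φ t)]

section Window

variable {φ : ℝ → ℝ} {L a b t : ℝ}

theorem LipschitzOnWith.mul_sub_sq_le_integral_right (hφ : LipschitzOnWith L.toNNReal φ (Icc a b))
    (hL : 0 ≤ L) (ht : a ≤ t) {β : ℝ} (hβ : 0 ≤ β) (hb : t + β ≤ b) :
    φ t * β - L * β ^ 2 / 2 ≤ ∫ s in t..t + β, φ s := by
  have hsub : Icc t (t + β) ⊆ Icc a b := Icc_subset_Icc ht hb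
  calc φ t * β - L * β ^ 2 / 2 = ∫ s in t..t + β, (φ t - L * (s - t)) := by
        rw [intervalIntegral.integral_comp_sub_right (fun x => φ t - L * x) t, sub_self,
          add_sub_cancel_left, intervalIntegral.integral_const_sub_mul]
    _ ≤ ∫ s in t..t + β, φ s := by
        refine intervalIntegral.integral_mono_on (by linarith)
          (Continuous.intervalIntegrable (by fun_prop) _ _)
          ((hφ.continuousOn.mono hsub).intervalIntegrable_of_Icc (by linarith)) fun s hs => ?_
        have := hφ.apply_sub_mul_abs_le hL (hsub hs) (hsub (left_mem_Icc.2 (by linarith)))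
        rwa [abs_of_nonneg (by linarith [hs.1])] at this

theorem LipschitzOnWith.mul_sub_sq_le_integral_left (hφ : LipschitzOnWith L.toNNReal φ (Icc a b))
    (hL : 0 ≤ L) (ht : t ≤ b) {α : ℝ} (hα : 0 ≤ α) (ha : a ≤ t - α) :
    φ t * α - L * α ^ 2 / 2 ≤ ∫ s in t - α..t, φ s := by
  have hsub : Icc (t - α) t ⊆ Icc a b := Icc_subset_Icc ha ht
  calc φ t * α - L * α ^ 2 / 2 = ∫ s in t - α..t, (φ t - L * (t - s)) := by
        rw [intervalIntegral.integral_comp_sub_left (fun x => φ t - L * x) t, sub_self,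
          sub_sub_cancel, intervalIntegral.integral_const_sub_mul]
    _ ≤ ∫ s in t - α..t, φ s := by
        refine intervalIntegral.integral_mono_on (by linarith)
          (Continuous.intervalIntegrable (by fun_prop) _ _)
          ((hφ.continuousOn.mono hsub).intervalIntegrable_of_Icc (by linarith)) fun s hs => ?_
        have := hφ.apply_sub_mul_abs_le hL (hsub hs) (hsub (right_mem_Icc.2 (by linarith)))
        rwa [abs_of_nonpos (by linarith [hs.2]), neg_sub] at this

theorem LipschitzOnWith.mul_sub_sq_le_integral {α β : ℝ}
    (hφ : LipschitzOnWith L.toNNReal φ (Icc a b)) (hL : 0 ≤ L) (hα : 0 ≤ α) (hβ : 0 ≤ β)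
    (ha : a ≤ t - α) (hb : t + β ≤ b) :
    φ t * (α + β) - L * (α ^ 2 + β ^ 2) / 2 ≤ ∫ s in t - α..t + β, φ s := by
  have hφi : ∀ x y, a ≤ x → x ≤ y → y ≤ b → IntervalIntegrable φ volume x y := fun x y hx hxy hy =>
    (hφ.continuousOn.mono (Icc_subset_Icc hx hy)).intervalIntegrable_of_Icc hxy
  rw [← intervalIntegral.integral_add_adjacent_intervals (b := t)
    (hφi _ _ ha (by linarith) (by linarith)) (hφi _ _ (by linarith) (by linarith) hb)]
  linarith [hφ.mul_sub_sq_le_integral_left hL (by linarith) hα ha,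
    hφ.mul_sub_sq_le_integral_right hL (by linarith) hβ hb]

end Window

noncomputable def disturbanceBound (L T q : ℝ) : ℝ :=
  if q < 1 / 2 * L * T ^ 2 then Real.sqrt (2 * L * q) else q / T + 1 / 2 * L * T

section DisturbanceBound

variable {L T q D : ℝ}

theorem disturbanceBound_nonneg (hL : 0 < L) (hT : 0 < T) : 0 ≤ disturbanceBound L T q := by
  unfold disturbanceBound
  split_ifs with hq
  · exact Real.sqrt_nonneg _
  · have : 0 ≤ q := by nlinarith
    positivity

theorem le_disturbanceBound_of_sq_le (hL : 0 < L) (hT : 0 < T) (h : D ^ 2 ≤ 2 * L * q) :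
    D ≤ disturbanceBound L T q := by
  refine (Real.le_sqrt_of_sq_le h).trans ?_
  unfold disturbanceBound
  split_ifs with hq
  · exact le_rfl
  · have hq0 : 0 ≤ q := by nlinarith
    -- AM-GM: `2 L q = 4 (q / T) (L T / 2) ≤ (q / T + L T / 2) ^ 2`
    refine Real.sqrt_le_iff.2 ⟨by positivity, ?_⟩
    have hqT : q / T * T = q := div_mul_cancel₀ q hT.ne'
    nlinarith [sq_nonneg (q / T - 1 / 2 * L * T)]

theorem le_disturbanceBound_of_mul_le (hT : 0 < T) (h₁ : D * T ≤ 2 * q)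
    (h₂ : D * T ≤ q + L * T ^ 2 / 2) : D ≤ disturbanceBound L T q := by
  unfold disturbanceBound
  split_ifs with hq
  · obtain hD | hD := le_or_gt D 0
    · exact hD.trans (Real.sqrt_nonneg _)
    refine Real.le_sqrt_of_sq_le ?_
    have hDT : (D * T) ^ 2 ≤ 2 * L * q * T ^ 2 := by nlinarith [mul_pos hD hT]
    nlinarith [pow_pos hT 2]
  · rw [div_add' _ _ _ hT.ne', le_div_iff₀ hT]
    linarith

end DisturbanceBound

theorem LipschitzOnWith.le_disturbanceBound {φ : ℝ → ℝ} {L T a b q t : ℝ} (hL : 0 < L)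
    (hT : 0 < T) (hab : b - a = T) (hφ : LipschitzOnWith L.toNNReal φ (Icc a b))
    (hS : ∀ τ₁ τ₂, a ≤ τ₁ → τ₁ ≤ τ₂ → τ₂ ≤ b → ∫ s in τ₁..τ₂, φ s ≤ q) (ht : t ∈ Icc a b) :
    φ t ≤ disturbanceBound L T q := by
  obtain hD | hD := le_or_gt (φ t) 0
  · exact hD.trans (disturbanceBound_nonneg hL hT)
  set ℓ := φ t / L with hℓ_def
  have hℓ0 : 0 ≤ ℓ := by positivity
  have hℓ : φ t * ℓ - L * ℓ ^ 2 / 2 = φ t ^ 2 / (2 * L) := by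
    rw [hℓ_def]; field_simp; ring
  by_cases hleft : a ≤ t - ℓ
  · apply le_disturbanceBound_of_sq_le hL hT
    have := (hφ.mul_sub_sq_le_integral_left hL.le ht.2 hℓ0 hleft).trans
      (hS _ _ hleft (by linarith) ht.2)
    rw [hℓ, div_le_iff₀ (by positivity)] at this
    linarith
  by_cases hright : t + ℓ ≤ b
  · apply le_disturbanceBound_of_sq_le hL hT
    have := (hφ.mul_sub_sq_le_integral_right hL.le ht.1 hℓ0 hright).trans
      (hS _ _ ht.1 (by linarith) hright)
    rw [hℓ, div_le_iff₀ (by positivity)] at this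
    linarith
  have hwin := hφ.mul_sub_sq_le_integral (α := t - a) (β := b - t) hL.le (by linarith [ht.1])
    (by linarith [ht.2]) (by linarith) (by linarith)
  rw [sub_sub_cancel, add_sub_cancel] at hwin
  replace hwin := hwin.trans (hS a b le_rfl (by linarith) le_rfl)
  have hα : L * (t - a) ≤ φ t := by
    rw [← le_div_iff₀' hL]; linarith
  have hβ : L * (b - t) ≤ φ t := by
    rw [← le_div_iff₀' hL]; linarith
  subst hab
  apply le_disturbanceBound_of_mul_le hT
  · nlinarith [mul_le_mul_of_nonneg_right hα (sub_nonneg.2 ht.1),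
      mul_le_mul_of_nonneg_right hβ (sub_nonneg.2 ht.2)]
  · nlinarith [mul_nonneg (sub_nonneg.2 ht.1) (sub_nonneg.2 ht.2)]

theorem LipschitzOnWith.norm_le_disturbanceBound {E : Type*} [NormedAddCommGroup E]
    [NormedSpace ℝ E] [CompleteSpace E] {d : ℝ → E} {L T a b q t : ℝ} (hL : 0 < L) (hT : 0 < T)
    (hab : b - a = T) (hd : LipschitzOnWith L.toNNReal d (Icc a b))
    (hS : ∀ τ₁ τ₂, a ≤ τ₁ → τ₁ ≤ τ₂ → τ₂ ≤ b → ‖∫ s in τ₁..τ₂, d s‖ ≤ q) (ht : t ∈ Icc a b) :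
    ‖d t‖ ≤ disturbanceBound L T q := by
  obtain ⟨g, hg, hgt⟩ := exists_dual_vector'' ℝ (d t)
  rw [RCLike.ofReal_real_eq_id, id] at hgt
  rw [← hgt]
  have hg_nnnorm : ‖g‖₊ ≤ 1 := hg
  refine LipschitzOnWith.le_disturbanceBound (φ := fun s => g (d s)) hL hT hab
    ((g.lipschitz.comp_lipschitzOnWith hd).weaken (mul_le_of_le_one_left zero_le hg_nnnorm))
    (fun τ₁ τ₂ h₁ h₁₂ h₂ => ?_) ht
  rw [g.intervalIntegral_comp_comm
    ((hd.continuousOn.mono (Icc_subset_Icc h₁ h₂)).intervalIntegrable_of_Icc h₁₂)]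
  calc g (∫ s in τ₁..τ₂, d s) ≤ ‖g (∫ s in τ₁..τ₂, d s)‖ := Real.le_norm_self _
    _ ≤ 1 * ‖∫ s in τ₁..τ₂, d s‖ := g.le_of_opNorm_le hg _
    _ ≤ q := by simpa using hS τ₁ τ₂ h₁ h₁₂ h₂

theorem stmt_6_general (n : ℕ) (d : ℝ → EuclideanSpace ℝ (Fin n))
    (Ld Tp a b q : ℝ) (hLd : 0 < Ld) (hTp : 0 < Tp)
    (hd : LipschitzOnWith Ld.toNNReal d (Set.Icc a b))
    (hab : b - a = Tp)
    (hS : ∀ τ₁ τ₂ : ℝ, a ≤ τ₁ → τ₁ ≤ τ₂ → τ₂ ≤ b →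
      ‖∫ s in τ₁..τ₂, d s‖ ≤ q) :
    ∀ t ∈ Set.Icc a b, ‖d t‖ ≤
      (if q < (1 / 2) * Ld * Tp ^ 2 then Real.sqrt (2 * Ld * q)
       else q / Tp + (1 / 2) * Ld * Tp) := fun _ ht =>
  hd.norm_le_disturbanceBound hLd hTp hab hS ht

theorem stmt_6 (n : ℕ) (d : ℝ → EuclideanSpace ℝ (Fin n))
    (Ld Tp a b q : ℝ) (hLd : 0 < Ld) (hTp : 0 < Tp) (hq : 0 ≤ q)
    (hd : LipschitzOnWith Ld.toNNReal d (Set.Icc a b))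
    (hcont : Continuous d)
    (hab : b - a = Tp)
    (hS : ∀ τ₁ τ₂ : ℝ, a ≤ τ₁ → τ₁ ≤ τ₂ → τ₂ ≤ b →
      ‖∫ s in τ₁..τ₂, d s‖ ≤ q) :
    ∀ t ∈ Set.Icc a b, ‖d t‖ ≤
      (if q < (1 / 2) * Ld * Tp ^ 2 then Real.sqrt (2 * Ld * q)
       else q / Tp + (1 / 2) * Ld * Tp) :=
  stmt_6_general n d Ld Tp a b q hLd hTp hd hab hS
end

section
/- Consider the OCP update q_{k+1} = q_k + η·(𝟙(S_k > q_k) − α) with fixed step size η > 0, α ∈ (0,1), scores S_k ∈ [0, B], and q_1 ∈ [−η, B + η]. Then for all K ≥ 1, |(1/K)·Σ_{k=1}^K 𝟙(S_k ≤ q_k) − (1 − α)| ≤ (B + 2η)/(η·K). -/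
/-!
Summing the update rule telescopes: `η · ∑ₖ (𝟙(Sₖ > qₖ) − α) = q_{K+1} − q₁`, and the
left-hand side is `−η K` times the coverage error. The iterates never leave `[−η, B + η]`:
a step can only move up from below `B` and only move down from above `0`, by at most `η`.
Hence the coverage error is at most the width `B + 2η` of that interval divided by `η K`.
-/

open Finset

section OnlineConformal

variable {α η a b : ℝ} {S q : ℕ → ℝ}

lemma ocp_step_mem_Icc (hα : α ∈ Set.Icc (0 : ℝ) 1) (hη : 0 ≤ η) {s x : ℝ}
    (hs : s ∈ Set.Icc a b) (hx : x ∈ Set.Icc (a - η) (b + η)) :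
    x + η * ((if s > x then (1 : ℝ) else 0) - α) ∈ Set.Icc (a - η) (b + η) := by
  obtain ⟨hα0, hα1⟩ := hα
  obtain ⟨hsa, hsb⟩ := hs
  obtain ⟨hxa, hxb⟩ := hx
  constructor <;> split_ifs <;> nlinarith

lemma ocp_mem_Icc (hα : α ∈ Set.Icc (0 : ℝ) 1) (hη : 0 ≤ η) (hS : ∀ k, S k ∈ Set.Icc a b)
    (hrec : ∀ k, q (k + 1) = q k + η * ((if S k > q k then (1 : ℝ) else 0) - α))
    {n : ℕ} (hn : q n ∈ Set.Icc (a - η) (b + η)) :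
    ∀ k, n ≤ k → q k ∈ Set.Icc (a - η) (b + η) := by
  intro k hk
  induction k, hk using Nat.le_induction with
  | base => exact hn
  | succ k _ ih => exact hrec k ▸ ocp_step_mem_Icc hα hη (hS k) ih

lemma ocp_mul_sum_miss_sub_eq
    (hrec : ∀ k, q (k + 1) = q k + η * ((if S k > q k then (1 : ℝ) else 0) - α))
    {m n : ℕ} (hmn : m ≤ n) :
    η * ∑ k ∈ Icc m n, ((if S k > q k then (1 : ℝ) else 0) - α) = q (n + 1) - q m := by
  rw [mul_sum, ← sum_Icc_sub hmn]
  exact sum_congr rfl fun k _ => by rw [hrec k]; ring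

end OnlineConformal

lemma average_coverage_sub_eq {ι : Type*} {s : Finset ι} (hs : s.Nonempty) (S q : ι → ℝ)
    (α : ℝ) :
    (1 / (#s : ℝ)) * ∑ k ∈ s, (if S k ≤ q k then (1 : ℝ) else 0) - (1 - α)
      = -((∑ k ∈ s, ((if S k > q k then (1 : ℝ) else 0) - α)) / #s) := by
  have hcover : ∀ k ∈ s, (if S k ≤ q k then (1 : ℝ) else 0)
      = (1 - α) - ((if S k > q k then (1 : ℝ) else 0) - α) := by
    intro k _
    by_cases h : S k ≤ q k
    · simp [h, not_lt.mpr h]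
    · simp [h, not_le.mp h]
  have hcard : (#s : ℝ) ≠ 0 := by exact_mod_cast hs.card_ne_zero
  rw [sum_congr rfl hcover, sum_sub_distrib, sum_const, nsmul_eq_mul]
  field_simp
  ring

theorem stmt_9_general (α η B : ℝ) (hα : α ∈ Set.Ioo (0 : ℝ) 1) (hη : 0 < η)
    (S q : ℕ → ℝ) (hS : ∀ k, S k ∈ Set.Icc 0 B)
    (hrec : ∀ k, q (k + 1) = q k + η * ((if S k > q k then (1 : ℝ) else 0) - α))
    (hq1 : q 1 ∈ Set.Icc (-η) (B + η)) :
    ∀ K : ℕ, 1 ≤ K →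
      |(1 / (K : ℝ)) * (∑ k ∈ Finset.Icc 1 K, (if S k ≤ q k then (1 : ℝ) else 0))
        - (1 - α)| ≤ (B + 2 * η) / (η * K) := by
  intro K hK
  have hq1' : q 1 ∈ Set.Icc (0 - η) (B + η) := by rwa [zero_sub]
  have hqK := ocp_mem_Icc (Set.Ioo_subset_Icc_self hα) hη.le hS hrec hq1' (K + 1) (by omega)
  have hspread : |q (K + 1) - q 1| ≤ B + 2 * η := by
    have h := Real.dist_le_of_mem_Icc hqK hq1'
    rw [Real.dist_eq] at h
    linarith
  have hK0 : (0 : ℝ) < K := by exact_mod_cast hK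
  have hcoverage := average_coverage_sub_eq (nonempty_Icc.2 hK) S q α
  rw [Nat.card_Icc, Nat.add_sub_cancel] at hcoverage
  have hdrift := congrArg abs (ocp_mul_sum_miss_sub_eq hrec hK)
  rw [abs_mul, abs_of_pos hη] at hdrift
  rw [hcoverage, abs_neg, abs_div, Nat.abs_cast, ← div_div, div_le_div_iff_of_pos_right hK0,
    le_div_iff₀ hη]
  linarith

theorem stmt_9 (α η B : ℝ) (hα : α ∈ Set.Ioo (0 : ℝ) 1) (hη : 0 < η) (hB : 0 < B)
    (S q : ℕ → ℝ) (hS : ∀ k, S k ∈ Set.Icc 0 B)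
    (hrec : ∀ k, q (k + 1) = q k + η * ((if S k > q k then (1 : ℝ) else 0) - α))
    (hq1 : q 1 ∈ Set.Icc (-η) (B + η)) :
    ∀ K : ℕ, 1 ≤ K →
      |(1 / (K : ℝ)) * (∑ k ∈ Finset.Icc 1 K, (if S k ≤ q k then (1 : ℝ) else 0))
        - (1 - α)| ≤ (B + 2 * η) / (η * K) :=
  stmt_9_general α η B hα hη S q hS hrec hq1
end

section
/- Let g : ℝ → ℝ be L_d-Lipschitz with g(t*) = d* ≥ 0 for t* ∈ [a,b], b − a = T_p. Then sup over a ≤ τ₁ ≤ τ₂ ≤ b of ∫_{τ₁}^{τ₂} g(s) ds ≥ min( (d*)²/(2 L_d), d*·T_p − (1/2)·L_d·T_p² ). -/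
/-!
Since `g` is `L`-Lipschitz, it dominates the tent `d* - L |s - t*|` around `t*`. Integrate over
the part of the tent's support `[t* - d*/L, t* + d*/L]` that lies in `[a, b]`: if the support
sticks out of `[a, b]` on at most one side, the full half-tent on the other side already
contributes the triangle area `d*² / (2L)` and the rest is nonnegative; otherwise the integral
is over all of `[a, b]` and is at least the trapezoid area `d* T - L T² / 2`.
-/

open intervalIntegral
open scoped NNReal

lemma integral_const_sub_mul_id (d K x : ℝ) :
    ∫ s in (0 : ℝ)..x, (d - K * s) = d * x - K * x ^ 2 / 2 := by
  rw [integral_sub intervalIntegrable_const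
    ((continuous_const_mul K).intervalIntegrable _ _), integral_const, integral_const_mul,
    integral_id]
  simp only [sub_zero, smul_eq_mul]
  ring

namespace LipschitzWith

variable {g : ℝ → ℝ} {K : ℝ≥0}

lemma sub_mul_abs_le (hg : LipschitzWith K g) (t u : ℝ) : g t - K * |u - t| ≤ g u := by
  have := hg.dist_le_mul u t
  rw [Real.dist_eq, Real.dist_eq] at this
  linarith [neg_abs_le (g u - g t)]

lemma le_integral_left (hg : LipschitzWith K g) (t : ℝ) {x : ℝ} (hx : 0 ≤ x) :
    g t * x - K * x ^ 2 / 2 ≤ ∫ s in t - x..t, g s := by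
  have hsub : ∫ s in t - x..t, g s = ∫ s in 0..x, g (t - s) := by simp [integral_comp_sub_left]
  rw [← integral_const_sub_mul_id, hsub]
  refine integral_mono_on hx
    ((by fun_prop : Continuous fun s : ℝ => g t - K * s).intervalIntegrable _ _)
    ((hg.continuous.comp (by fun_prop) : Continuous fun s => g (t - s)).intervalIntegrable _ _) ?_
  intro s hs
  simpa [abs_of_nonneg hs.1] using hg.sub_mul_abs_le t (t - s)

lemma le_integral_right (hg : LipschitzWith K g) (t : ℝ) {y : ℝ} (hy : 0 ≤ y) :
    g t * y - K * y ^ 2 / 2 ≤ ∫ s in t..t + y, g s := by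
  have hsub : ∫ s in t..t + y, g s = ∫ s in 0..y, g (t + s) := by simp [add_comm t]
  rw [← integral_const_sub_mul_id, hsub]
  refine integral_mono_on hy
    ((by fun_prop : Continuous fun s : ℝ => g t - K * s).intervalIntegrable _ _)
    ((hg.continuous.comp (by fun_prop) : Continuous fun s => g (t + s)).intervalIntegrable _ _) ?_
  intro s hs
  simpa [abs_of_nonneg hs.1] using hg.sub_mul_abs_le t (t + s)

lemma le_integral (hg : LipschitzWith K g) (t : ℝ) {x y : ℝ} (hx : 0 ≤ x) (hy : 0 ≤ y) :
    g t * (x + y) - K * (x ^ 2 + y ^ 2) / 2 ≤ ∫ s in t - x..t + y, g s := by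
  rw [← integral_add_adjacent_intervals (b := t) (hg.continuous.intervalIntegrable _ _)
    (hg.continuous.intervalIntegrable _ _)]
  linarith [hg.le_integral_left t hx, hg.le_integral_right t hy]

end LipschitzWith

lemma bddAbove_setOf_integral_subinterval {g : ℝ → ℝ} (hg : Continuous g) (a b : ℝ) :
    BddAbove {r : ℝ | ∃ τ₁ τ₂ : ℝ, a ≤ τ₁ ∧ τ₁ ≤ τ₂ ∧ τ₂ ≤ b ∧ r = ∫ s in τ₁..τ₂, g s} := by
  have hF : Continuous fun p : ℝ × ℝ => ∫ s in p.1..p.2, g s := by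
    have hprim :=
      continuous_primitive (μ := MeasureTheory.volume) (fun _ _ => hg.intervalIntegrable _ _) a
    have : (fun p : ℝ × ℝ => ∫ s in p.1..p.2, g s) =
        fun p => (∫ s in a..p.2, g s) - ∫ s in a..p.1, g s :=
      funext fun p => (integral_interval_sub_left (hg.intervalIntegrable _ _)
        (hg.intervalIntegrable _ _)).symm
    rw [this]
    fun_prop
  have hIcc := isCompact_Icc (a := a) (b := b)
  refine ((hIcc.prod hIcc).image hF).bddAbove.mono ?_
  rintro r ⟨τ₁, τ₂, h₁, h₁₂, h₂, rfl⟩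
  exact ⟨(τ₁, τ₂), ⟨⟨h₁, h₁₂.trans h₂⟩, ⟨h₁.trans h₁₂, h₂⟩⟩, rfl⟩

lemma min_triangle_trapezoid_le {L d p q : ℝ} (hL : 0 < L) (hd : 0 ≤ d) (hp : 0 ≤ p)
    (hq : 0 ≤ q) :
    min (d ^ 2 / (2 * L)) (d * (p + q) - 1 / 2 * L * (p + q) ^ 2) ≤
      d * (min p (d / L) + min q (d / L)) - L * (min p (d / L) ^ 2 + min q (d / L) ^ 2) / 2 := by
  set c := d / L with hc
  have hLc : L * c = d := mul_div_cancel₀ d hL.ne'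
  have area_nonneg : ∀ x, 0 ≤ x → x ≤ c → 0 ≤ d * x - L * x ^ 2 / 2 := fun x hx hxc => by
    nlinarith [mul_le_mul_of_nonneg_left hxc hL.le]
  have area_c : d * c - L * c ^ 2 / 2 = d ^ 2 / (2 * L) := by
    rw [hc]; field_simp; ring
  have hc0 : 0 ≤ c := by positivity
  rcases min_cases p c with ⟨hx, hpc⟩ | ⟨hx, -⟩ <;>
    rcases min_cases q c with ⟨hy, hqc⟩ | ⟨hy, -⟩ <;> rw [hx, hy]
  · nlinarith [min_le_right (d ^ 2 / (2 * L)) (d * (p + q) - 1 / 2 * L * (p + q) ^ 2),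
      mul_nonneg (mul_nonneg hL.le hp) hq]
  · nlinarith [min_le_left (d ^ 2 / (2 * L)) (d * (p + q) - 1 / 2 * L * (p + q) ^ 2),
      area_nonneg p hp hpc]
  · nlinarith [min_le_left (d ^ 2 / (2 * L)) (d * (p + q) - 1 / 2 * L * (p + q) ^ 2),
      area_nonneg q hq hqc]
  · nlinarith [min_le_left (d ^ 2 / (2 * L)) (d * (p + q) - 1 / 2 * L * (p + q) ^ 2)]

theorem stmt_19_general (g : ℝ → ℝ) (Ld Tp a b tstar dstar : ℝ)
    (hLd : 0 < Ld)
    (hg : LipschitzWith Ld.toNNReal g)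
    (hts : tstar ∈ Set.Icc a b) (hval : g tstar = dstar) (hd0 : 0 ≤ dstar)
    (hab : b - a = Tp) :
    min (dstar ^ 2 / (2 * Ld)) (dstar * Tp - (1 / 2) * Ld * Tp ^ 2) ≤
      sSup {r : ℝ | ∃ τ₁ τ₂ : ℝ, a ≤ τ₁ ∧ τ₁ ≤ τ₂ ∧ τ₂ ≤ b ∧
        r = ∫ s in τ₁..τ₂, g s} := by
  obtain ⟨hta, htb⟩ := hts
  set x := min (tstar - a) (dstar / Ld)
  set y := min (b - tstar) (dstar / Ld)
  have hx : 0 ≤ x := le_min (by linarith) (by positivity)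
  have hy : 0 ≤ y := le_min (by linarith) (by positivity)
  have hmem : (∫ s in tstar - x..tstar + y, g s) ∈
      {r : ℝ | ∃ τ₁ τ₂ : ℝ, a ≤ τ₁ ∧ τ₁ ≤ τ₂ ∧ τ₂ ≤ b ∧ r = ∫ s in τ₁..τ₂, g s} :=
    ⟨_, _, by linarith [min_le_left (tstar - a) (dstar / Ld)], by linarith,
      by linarith [min_le_left (b - tstar) (dstar / Ld)], rfl⟩
  refine le_trans ?_ (le_csSup (bddAbove_setOf_integral_subinterval hg.continuous a b) hmem)
  calc _ ≤ dstar * (x + y) - Ld * (x ^ 2 + y ^ 2) / 2 := by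
        have := min_triangle_trapezoid_le hLd hd0 (sub_nonneg.2 hta) (sub_nonneg.2 htb)
        rwa [show tstar - a + (b - tstar) = Tp by linarith] at this
    _ ≤ ∫ s in tstar - x..tstar + y, g s := by
        simpa [Real.coe_toNNReal _ hLd.le, hval] using hg.le_integral tstar hx hy

theorem stmt_19 (g : ℝ → ℝ) (Ld Tp a b tstar dstar : ℝ)
    (hLd : 0 < Ld) (hTp : 0 < Tp)
    (hg : LipschitzWith Ld.toNNReal g)
    (hts : tstar ∈ Set.Icc a b) (hval : g tstar = dstar) (hd0 : 0 ≤ dstar)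
    (hab : b - a = Tp) :
    min (dstar ^ 2 / (2 * Ld)) (dstar * Tp - (1 / 2) * Ld * Tp ^ 2) ≤
      sSup {r : ℝ | ∃ τ₁ τ₂ : ℝ, a ≤ τ₁ ∧ τ₁ ≤ τ₂ ∧ τ₂ ≤ b ∧
        r = ∫ s in τ₁..τ₂, g s} :=
  stmt_19_general g Ld Tp a b tstar dstar hLd hg hts hval hd0 hab
end
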